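/- arXiv:2502.03352 — 4 statements merged into one kernel-verified Lean document; each statement's English description precedes it below -/
import Mathlib

section
/- Let X be a separable F-space, Y a normed space, and (T_n : X → Y) continuous linear operators. If the set of irregular vectors for (T_n) is residual in X, then (T_n) is densely Li-Yorke chaotic: there is an uncountable dense set Γ ⊂ X such that p−q is irregular for all distinct p,q ∈ Γ. -/
open Filter Topology

/-- A vector `x` is irregular for the sequence of operators `(T n)` if
`liminf ‖T n x‖ = 0` and `limsup ‖T n x‖ = ∞`. -/
def Irregular {X Y : Type*} [AddCommGroup X] [Module ℂ X] [TopologicalSpace X]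
    [NormedAddCommGroup Y] [NormedSpace ℂ Y]
    (T : ℕ → X →L[ℂ] Y) (x : X) : Prop :=
  Filter.liminf (fun n => ENNReal.ofReal ‖T n x‖) Filter.atTop = 0 ∧
  Filter.limsup (fun n => ENNReal.ofReal ‖T n x‖) Filter.atTop = ⊤

/-!
The map `(p, q) ↦ p - q` is continuous and open, so the pairs with irregular difference form a
residual relation on `X × X`, to which Mycielski's argument applies. Fix a decreasing sequence of dense
open sets `W n` whose intersection lies in the relation and a countable π-base `B n`. Build, level
by level, closed balls on the nodes of countably many binary trees, the `j`-th tree rooted inside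
`B (j - 1)`: at level `n + 1` each node stays inside its parent, radii are at most `2⁻ⁿ⁻¹`, and
any two distinct nodes carry balls whose product lies in `W n`. By completeness every branch
converges; two distinct branches eventually pass through distinct nodes of the same level, so their
limits are related. The limits are dense by the choice of the roots, and they are pairwise
distinct because `0` is not irregular, so the `2^ℵ₀` branches of one tree give an uncountable set.
-/

open Set Metric PiNat

theorem isOpenMap_sub {G : Type*} [AddGroup G] [TopologicalSpace G] [IsTopologicalAddGroup G] :
    IsOpenMap fun p : G × G => p.1 - p.2 := by
  intro W hW
  have : (fun p : G × G => p.1 - p.2) '' W = ⋃ q, (· - q) '' ((·, q) ⁻¹' W) := by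
    ext
    simp only [mem_image, mem_iUnion, mem_preimage, Prod.exists]
    exact exists_comm
  rw [this]
  exact isOpen_iUnion fun q => isOpenMap_sub_right q _ (hW.preimage (by fun_prop))

theorem exists_antitone_isOpen_dense_of_mem_residual {Y : Type*} [TopologicalSpace Y]
    [BaireSpace Y] {s : Set Y} (hs : s ∈ residual Y) :
    ∃ W : ℕ → Set Y, (∀ n, IsOpen (W n) ∧ Dense (W n)) ∧ Antitone W ∧ ⋂ n, W n ⊆ s := by
  obtain ⟨_, hts, htG, htd⟩ := mem_residual.mp hs
  obtain ⟨f, hfo, rfl⟩ := isGδ_iff_eq_iInter_nat.mp htG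
  refine ⟨fun n => ⋂ k ≤ n, f k, fun n => ⟨?_, htd.mono ?_⟩, fun m n hmn => ?_, ?_⟩
  · exact (finite_le_nat n).isOpen_biInter fun k _ => hfo k
  · exact subset_iInter₂ fun k _ => iInter_subset f k
  · exact biInter_mono (fun k (hk : k ≤ m) => hk.trans hmn) fun _ _ => subset_rfl
  · exact (iInter_mono fun n =>
      iInter₂_subset (κ := (· ≤ n)) (s := fun k _ => f k) n le_rfl).trans hts

theorem exists_seq_isOpen_nonempty_subset (Y : Type*) [TopologicalSpace Y]
    [SecondCountableTopology Y] [Nonempty Y] :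
    ∃ B : ℕ → Set Y, (∀ n, IsOpen (B n) ∧ (B n).Nonempty) ∧
      ∀ O, IsOpen O → O.Nonempty → ∃ n, B n ⊆ O := by
  obtain ⟨b, hbc, hbe, hb⟩ := TopologicalSpace.exists_countable_basis Y
  obtain ⟨u, hu, -⟩ := hb.exists_subset_of_mem_open (mem_univ (Classical.arbitrary Y)) isOpen_univ
  obtain ⟨B, rfl⟩ := hbc.exists_eq_range ⟨u, hu⟩
  refine ⟨B, fun n => ⟨hb.isOpen (mem_range_self n),
    nonempty_iff_ne_empty.2 fun h => hbe (h ▸ mem_range_self n)⟩, ?_⟩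
  rintro O hO ⟨y, hy⟩
  obtain ⟨_, ⟨n, rfl⟩, -, hn⟩ := hb.exists_subset_of_mem_open hy hO
  exact ⟨n, hn⟩

theorem IsOpen.exists_closedBall_subset {Y : Type*} [PseudoMetricSpace Y] {U : Set Y}
    (hU : IsOpen U) (hne : U.Nonempty) {ε : ℝ} (hε : 0 < ε) :
    ∃ c r, 0 < r ∧ r ≤ ε ∧ closedBall c r ⊆ U := by
  obtain ⟨c, hc⟩ := hne
  obtain ⟨δ, hδ, hball⟩ := Metric.isOpen_iff.mp hU c hc
  exact ⟨c, min (δ / 2) ε, by positivity, min_le_right _ _,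
    (closedBall_subset_ball ((min_le_left _ _).trans_lt (half_lt_self hδ))).trans hball⟩

theorem nonempty_iInter_closedBall_of_antitone {Y : Type*} [PseudoMetricSpace Y] [CompleteSpace Y]
    {c : ℕ → Y} {r : ℕ → ℝ} (hanti : Antitone fun t => closedBall (c t) (r t))
    (hr0 : ∀ t, 0 ≤ r t) (hr : Tendsto r atTop (𝓝 0)) :
    (⋂ t, closedBall (c t) (r t)).Nonempty := by
  refine nonempty_iInter_of_nonempty_biInter (fun _ => isClosed_closedBall)
    (fun _ => isBounded_closedBall) (fun N => ⟨c N, mem_iInter₂.2 fun t ht => ?_⟩) ?_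
  · exact hanti ht (mem_closedBall_self (hr0 N))
  · exact squeeze_zero (fun _ => diam_nonneg) (fun t => diam_closedBall (hr0 t))
      (by simpa using hr.const_mul 2)

theorem Dense.exists_isOpen_prod_subset {X Y : Type*} [TopologicalSpace X] [TopologicalSpace Y]
    {R : Set (X × Y)} (hRo : IsOpen R) (hRd : Dense R) {U : Set X} {V : Set Y}
    (hU : IsOpen U) (hUne : U.Nonempty) (hV : IsOpen V) (hVne : V.Nonempty) :
    ∃ U' V', (IsOpen U' ∧ U'.Nonempty ∧ U' ⊆ U) ∧ (IsOpen V' ∧ V'.Nonempty ∧ V' ⊆ V) ∧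
      U' ×ˢ V' ⊆ R := by
  obtain ⟨⟨p, q⟩, ⟨hp, hq⟩, hpq⟩ := hRd.inter_open_nonempty _ (hU.prod hV) (hUne.prod hVne)
  obtain ⟨u, v, hu, hv, hpu, hqv, huv⟩ := isOpen_prod_iff.mp hRo p q hpq
  exact ⟨u ∩ U, v ∩ V, ⟨hu.inter hU, ⟨p, hpu, hp⟩, inter_subset_right⟩,
    ⟨hv.inter hV, ⟨q, hqv, hq⟩, inter_subset_right⟩,
    (prod_mono inter_subset_left inter_subset_left).trans huv⟩

theorem Dense.exists_shrink_prod_subset {X ι : Type*} [TopologicalSpace X] {R : Set (X × X)}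
    (hRo : IsOpen R) (hRd : Dense R)
    {P : Set (ι × ι)} (hP : P.Finite) (U : ι → Set X) (hU : ∀ i, IsOpen (U i) ∧ (U i).Nonempty) :
    ∃ V : ι → Set X, (∀ i, IsOpen (V i) ∧ (V i).Nonempty ∧ V i ⊆ U i) ∧
      ∀ p ∈ P, p.1 ≠ p.2 → V p.1 ×ˢ V p.2 ⊆ R := by
  induction P, hP using Set.Finite.induction_on with
  | empty => exact ⟨U, fun i => ⟨(hU i).1, (hU i).2, subset_rfl⟩, by simp⟩
  | @insert p P _ _ ih =>
    obtain ⟨V, hV, hVP⟩ := ih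
    obtain ⟨a, b⟩ := p
    by_cases hab : a = b
    · refine ⟨V, hV, ?_⟩
      rintro _ (rfl | hp) hne
      exacts [absurd hab hne, hVP _ hp hne]
    obtain ⟨A, B, hA, hB, hAB⟩ :=
      hRd.exists_isOpen_prod_subset hRo (hV a).1 (hV a).2.1 (hV b).1 (hV b).2.1
    classical
    let V' := Function.update (Function.update V a A) b B
    have hV'V : ∀ i, IsOpen (V' i) ∧ (V' i).Nonempty ∧ V' i ⊆ V i := by
      intro i
      simp only [V', Function.update_apply]
      split_ifs with hb ha
      · exact hb ▸ hB
      · exact ha ▸ hA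
      · exact ⟨(hV i).1, (hV i).2.1, subset_rfl⟩
    refine ⟨V', fun i => ⟨(hV'V i).1, (hV'V i).2.1, (hV'V i).2.2.trans (hV i).2.2⟩, ?_⟩
    rintro _ (rfl | hp) hne
    · simpa [V', Function.update_of_ne hab] using hAB
    · exact (prod_mono (hV'V _).2.2 (hV'V _).2.2).trans (hVP _ hp hne)

namespace Mycielski

/-- The node `(j, σ)` is the vertex at path `σ` of the `j`-th binary tree, whose root sits at
level `j`. -/
abbrev Node := ℕ × List Bool

def level (ν : Node) : ℕ := ν.1 + ν.2.length

theorem finite_setOf_level_eq (n : ℕ) : {ν : Node | level ν = n}.Finite :=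
  ((finite_Iic n).prod (List.finite_length_le Bool n)).subset fun ν (hν : level ν = n) =>
    ⟨show ν.1 ≤ n by unfold level at hν; omega, show ν.2.length ≤ n by unfold level at hν; omega⟩

theorem exists_ne_res {j j' : ℕ} {b b' : ℕ → Bool} (h : (j, b) ≠ (j', b')) (k : ℕ) :
    ∃ m, k ≤ m ∧ j ≤ m + 1 ∧ j' ≤ m + 1 ∧
      ((j, res b (m + 1 - j)) : Node) ≠ (j', res b' (m + 1 - j')) := by
  by_cases hj : j = j'
  · subst hj
    have hb : b ≠ b' := fun hb => h (hb ▸ rfl)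
    obtain ⟨s, hs⟩ := Function.ne_iff.1 hb
    refine ⟨k + j + s, by omega, by omega, by omega, fun heq => hs ?_⟩
    exact res_eq_res.1 (Prod.ext_iff.1 heq).2 (show s < k + j + s + 1 - j by omega)
  · exact ⟨k + j + j', by omega, by omega, by omega, fun heq => hj (Prod.ext_iff.1 heq).1⟩

theorem level_res (j : ℕ) (b : ℕ → Bool) {m : ℕ} (hj : j ≤ m) : level (j, res b (m - j)) = m := by
  simp [level, res_length, Nat.add_sub_cancel' hj]

/-- Closed balls attached to all nodes; at stage `n` only the nodes of level `n` matter. -/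
structure Stage (X : Type*) [MetricSpace X] where
  center : Node → X
  radius : Node → ℝ
  radius_pos : ∀ ν, 0 < radius ν

variable {X : Type*} [MetricSpace X]

def Stage.cell (S : Stage X) (ν : Node) : Set X := closedBall (S.center ν) (S.radius ν)

structure IsRefinement (W : Set (X × X)) (B : Set X) (n : ℕ) (S S' : Stage X) : Prop where
  radius_le : ∀ ν, S'.radius ν ≤ (1 / 2) ^ (n + 1)
  cell_cons_subset : ∀ j σ i, S'.cell (j, i :: σ) ⊆ S.cell (j, σ)
  cell_root_subset : S'.cell (n + 1, []) ⊆ B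
  cell_prod_subset : ∀ ν ν', level ν = n + 1 → level ν' = n + 1 → ν ≠ ν' →
    S'.cell ν ×ˢ S'.cell ν' ⊆ W

theorem Stage.exists_isRefinement {W : Set (X × X)} (hWo : IsOpen W) (hWd : Dense W)
    {B : Set X} (hBo : IsOpen B) (hB : B.Nonempty) (n : ℕ) (S : Stage X) :
    ∃ S' : Stage X, IsRefinement W B n S S' := by
  classical
  -- the open set a new cell must lie in: its parent's ball, or `B` for the new root
  let U : Node → Set X := fun ν =>
    if ν = (n + 1, []) then B else ball (S.center (ν.1, ν.2.tail)) (S.radius (ν.1, ν.2.tail))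
  have hU : ∀ ν, IsOpen (U ν) ∧ (U ν).Nonempty := by
    intro ν
    dsimp only [U]
    split_ifs
    exacts [⟨hBo, hB⟩, ⟨isOpen_ball, nonempty_ball.2 (S.radius_pos _)⟩]
  obtain ⟨V, hV, hVW⟩ := hWd.exists_shrink_prod_subset hWo
    ((finite_setOf_level_eq (n + 1)).prod (finite_setOf_level_eq (n + 1))) U hU
  choose c r hr hrle hcV using fun ν =>
    (hV ν).1.exists_closedBall_subset (hV ν).2.1 (by positivity : (0 : ℝ) < (1 / 2) ^ (n + 1))
  have hcU : ∀ ν, closedBall (c ν) (r ν) ⊆ U ν := fun ν => (hcV ν).trans (hV ν).2.2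
  refine ⟨⟨c, r, hr⟩, hrle, fun j σ i => ?_, ?_, fun ν ν' hν hν' hne => ?_⟩
  · exact (hcU (j, i :: σ)).trans (by simp [U, Stage.cell, ball_subset_closedBall])
  · exact (hcU (n + 1, [])).trans (by simp [U])
  · exact (prod_mono (hcV ν) (hcV ν')).trans (hVW (ν, ν') ⟨hν, hν'⟩ hne)

variable [CompleteSpace X]

theorem exists_forall_mem_cell {S : ℕ → Stage X}
    (hsub : ∀ m j σ i, (S (m + 1)).cell (j, i :: σ) ⊆ (S m).cell (j, σ))
    (hrad : ∀ m ν, (S m).radius ν ≤ (1 / 2) ^ m) (j : ℕ) (b : ℕ → Bool) :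
    ∃ x, ∀ t, x ∈ (S (j + t)).cell (j, res b t) := by
  have hr : Tendsto (fun t => (S (j + t)).radius (j, res b t)) atTop (𝓝 0) :=
    squeeze_zero (fun t => ((S _).radius_pos _).le)
      (fun t => (hrad _ _).trans (pow_le_pow_of_le_one (by norm_num) (by norm_num) le_add_self))
      (tendsto_pow_atTop_nhds_zero_of_lt_one (by norm_num) (by norm_num))
  obtain ⟨x, hx⟩ := nonempty_iInter_closedBall_of_antitone
    (c := fun t => (S (j + t)).center (j, res b t)) (r := fun t => (S (j + t)).radius (j, res b t))
    (antitone_nat_of_succ_le fun t => hsub (j + t) j (res b t) (b t))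
    (fun t => ((S _).radius_pos _).le) hr
  exact ⟨x, mem_iInter.1 hx⟩

theorem exists_denseRange_pairwise_mem_of_mem_residual [TopologicalSpace.SeparableSpace X]
    [Nonempty X] {R : Set (X × X)} (hR : R ∈ residual (X × X)) :
    ∃ x : ℕ × (ℕ → Bool) → X, DenseRange x ∧ Pairwise fun i j => (x i, x j) ∈ R := by
  obtain ⟨W, hW, hWanti, hWR⟩ := exists_antitone_isOpen_dense_of_mem_residual hR
  obtain ⟨B, hB, hBO⟩ := exists_seq_isOpen_nonempty_subset X
  choose next hnext using fun n =>
    Stage.exists_isRefinement (hW n).1 (hW n).2 (hB n).1 (hB n).2 n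
  let S : ℕ → Stage X := fun n =>
    Nat.rec ⟨fun _ => Classical.arbitrary X, fun _ => 1, fun _ => one_pos⟩ next n
  have hS : ∀ n, IsRefinement (W n) (B n) n (S n) (S (n + 1)) := fun n => hnext n (S n)
  have hrad : ∀ m ν, (S m).radius ν ≤ (1 / 2) ^ m := by
    rintro (_ | m) ν
    exacts [le_of_eq (pow_zero _).symm, (hS m).radius_le ν]
  choose x hx using exists_forall_mem_cell (fun m => (hS m).cell_cons_subset) hrad
  have hx' : ∀ j b m, j ≤ m → x j b ∈ (S m).cell (j, res b (m - j)) := fun j b m hjm => by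
    simpa [Nat.add_sub_cancel' hjm] using hx j b (m - j)
  refine ⟨fun i => x i.1 i.2, ?_, ?_⟩
  · refine dense_iff_inter_open.2 fun O hO hOne => ?_
    obtain ⟨n, hn⟩ := hBO O hO hOne
    exact ⟨_, hn ((hS n).cell_root_subset (hx (n + 1) (fun _ => false) 0)),
      mem_range_self (n + 1, fun _ => false)⟩
  · rintro ⟨j, b⟩ ⟨j', b'⟩ hne
    refine hWR (mem_iInter.2 fun k => ?_)
    obtain ⟨m, hkm, hj, hj', hν⟩ := exists_ne_res hne k
    exact hWanti hkm ((hS m).cell_prod_subset _ _ (level_res j b hj) (level_res j' b' hj') hν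
      ⟨hx' j b (m + 1) hj, hx' j' b' (m + 1) hj'⟩)

end Mycielski

instance : Uncountable (ℕ → Bool) := by
  rw [← Cardinal.aleph0_lt_mk_iff]
  simpa using Cardinal.cantor Cardinal.aleph0

theorem not_irregular_zero {X Y : Type*} [AddCommGroup X] [Module ℂ X] [TopologicalSpace X]
    [NormedAddCommGroup Y] [NormedSpace ℂ Y] (T : ℕ → X →L[ℂ] Y) : ¬ Irregular T 0 := by
  rintro ⟨-, hsup⟩
  simp at hsup

theorem denselyLiYorke_of_residual_irregular_general
    {X Y : Type*} [AddCommGroup X] [Module ℂ X] [MetricSpace X] [CompleteSpace X]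
    [IsTopologicalAddGroup X] [TopologicalSpace.SeparableSpace X]
    [NormedAddCommGroup Y] [NormedSpace ℂ Y]
    (T : ℕ → X →L[ℂ] Y)
    (h : {x : X | Irregular T x} ∈ residual X) :
    ∃ Γ : Set X, Dense Γ ∧ ¬ Γ.Countable ∧
      ∀ p ∈ Γ, ∀ q ∈ Γ, p ≠ q → Irregular T (p - q) := by
  obtain ⟨x, hdense, hx⟩ := Mycielski.exists_denseRange_pairwise_mem_of_mem_residual
    (tendsto_residual_of_isOpenMap continuous_sub isOpenMap_sub h)
  have hinj : Function.Injective x := fun i j hij =>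
    by_contra fun hne => not_irregular_zero T (by simpa [hij] using hx hne)
  refine ⟨range x, hdense, fun hc => not_countable_univ (by simpa using hc.preimage hinj), ?_⟩
  rintro _ ⟨i, rfl⟩ _ ⟨j, rfl⟩ hne
  exact hx (ne_of_apply_ne x hne)

/-- If `X` is a separable F-space and the set of irregular vectors for
`(T n)` is residual in `X`, then `(T n)` is densely Li-Yorke chaotic: there is an
uncountable dense set Γ such that p - q is irregular for all distinct p, q ∈ Γ. -/
theorem denselyLiYorke_of_residual_irregular
    {X Y : Type*} [AddCommGroup X] [Module ℂ X] [MetricSpace X] [CompleteSpace X]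
    [IsTopologicalAddGroup X] [ContinuousSMul ℂ X] [TopologicalSpace.SeparableSpace X]
    [NormedAddCommGroup Y] [NormedSpace ℂ Y]
    (T : ℕ → X →L[ℂ] Y)
    (h : {x : X | Irregular T x} ∈ residual X) :
    ∃ Γ : Set X, Dense Γ ∧ ¬ Γ.Countable ∧
      ∀ p ∈ Γ, ∀ q ∈ Γ, p ≠ q → Irregular T (p - q) :=
  denselyLiYorke_of_residual_irregular_general T h
end

section
/- Let X be an F-space and Y a normed space. If a sequence of continuous linear operators (T_n : X → Y) satisfies the Li-Yorke Chaotic Criterion, then (T_n) admits an irregular vector. -/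
open Filter Topology

/-- The Li-Yorke Chaotic Criterion (LYCC): there exist a set `X₀ ⊆ X` and a strictly
increasing sequence of indices `(n k)` such that `T (n k) x → 0` for every `x ∈ X₀`,
and there is a bounded sequence `(a n)` in the closed linear span of `X₀` such that
`(T n (a n))` is unbounded. -/
def LYCC {X Y : Type*} [AddCommGroup X] [Module ℂ X] [TopologicalSpace X]
    [NormedAddCommGroup Y] [NormedSpace ℂ Y]
    (T : ℕ → X →L[ℂ] Y) : Prop :=
  ∃ (X₀ : Set X) (nk : ℕ → ℕ), StrictMono nk ∧
    (∀ x ∈ X₀, Filter.Tendsto (fun k => T (nk k) x) Filter.atTop (nhds 0)) ∧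
    ∃ a : ℕ → X, (∀ n, a n ∈ closure (Submodule.span ℂ X₀ : Set X)) ∧
      Bornology.IsVonNBounded ℂ (Set.range a) ∧
      ¬ ∃ M : ℝ, ∀ n, ‖T n (a n)‖ ≤ M

/-!
Work in the closure `Z` of `span X₀`, a complete metric space and hence a Baire space.
The vectors of `Z` with unbounded orbit `(T n x)` form a residual set: otherwise the `T n` are
uniformly bounded on a nonempty open subset of `Z`, and absorbing the bounded sequence `(a n)`
into a translate of that set bounds `T n (a n)`. For every `ε > 0`, the vectors with
`‖T (n k) x‖ < ε` for infinitely many `k` form a residual set too, being a countable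
intersection of open sets that contain the dense subspace `span X₀`. Any vector in the
intersection of these residual sets is irregular.
-/

open Set Bornology

section Sequences

variable {ι : Type*} {l : Filter ι} {u : ι → ℝ}

theorem liminf_ofReal_eq_zero_of_frequently_lt (h : ∀ ε > 0, ∃ᶠ i in l, u i < ε) :
    liminf (fun i => ENNReal.ofReal (u i)) l = 0 := by
  refine le_antisymm (ENNReal.le_of_forall_pos_le_add fun ε hε _ => ?_) bot_le
  rw [zero_add, ← ENNReal.ofReal_coe_nnreal]
  exact liminf_le_of_frequently_le' <|
    (h ε hε).mono fun i hi => ENNReal.ofReal_le_ofReal hi.le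

theorem limsup_ofReal_eq_top_of_not_isBoundedUnder (h : ¬ IsBoundedUnder (· ≤ ·) l u) :
    limsup (fun i => ENNReal.ofReal (u i)) l = ⊤ := by
  refine ENNReal.eq_top_of_forall_nnreal_le fun M => le_limsup_of_frequently_le' ?_
  have hM : ∃ᶠ i in l, ¬ u i ≤ M := not_eventually.1 fun hle => h ⟨M, hle⟩
  rw [← ENNReal.ofReal_coe_nnreal]
  exact hM.mono fun i hi => ENNReal.ofReal_le_ofReal (not_le.1 hi).le

end Sequences

theorem tendsto_zero_of_mem_span {ι R M N F : Type*} [Semiring R] [AddCommMonoid M] [Module R M]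
    [AddCommMonoid N] [Module R N] [TopologicalSpace N] [ContinuousAdd N]
    [ContinuousConstSMul R N] [FunLike F M N] [LinearMapClass F R M N] {l : Filter ι}
    {f : ι → F} {s : Set M} (hs : ∀ x ∈ s, Tendsto (fun i => f i x) l (𝓝 0)) {x : M}
    (hx : x ∈ Submodule.span R s) : Tendsto (fun i => f i x) l (𝓝 0) := by
  induction hx using Submodule.span_induction with
  | mem x hx => exact hs x hx
  | zero => simpa using tendsto_const_nhds
  | add x y _ _ hx hy => simpa using hx.add hy
  | smul c x _ hx => simpa using hx.const_smul c

section Residual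

variable {E : Type*} [TopologicalSpace E]

theorem eventually_residual_not_bddAbove {ι : Type*} {f : ι → E → ℝ}
    (hf : ∀ i, Continuous (f i)) (hdense : ∀ M, Dense {x | ∃ i, M < f i x}) :
    ∀ᶠ x in residual E, ¬ BddAbove (range fun i => f i x) := by
  have hopen (M : ℝ) : IsOpen {x | ∃ i, M < f i x} := by
    simpa only [ofPred_exists] using isOpen_iUnion fun i => isOpen_lt continuous_const (hf i)
  have hM : ∀ M : ℕ, ∀ᶠ x in residual E, ∃ i, (M : ℝ) < f i x := fun M =>
    residual_of_dense_open (hopen M) (hdense M)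
  filter_upwards [eventually_countable_forall.2 hM] with x hx ⟨C, hC⟩
  obtain ⟨i, hi⟩ := hx ⌈C⌉₊
  linarith [hC ⟨i, rfl⟩, Nat.le_ceil C]

theorem eventually_residual_frequently_lt {g : ℕ → E → ℝ} (hg : ∀ k, Continuous (g k))
    {D : Set E} (hD : Dense D) (h : ∀ x ∈ D, Tendsto (fun k => g k x) atTop (𝓝 0)) :
    ∀ᶠ x in residual E, ∀ ε > 0, ∃ᶠ k in atTop, g k x < ε := by
  have hε (ε : ℝ) (hε : 0 < ε) (N : ℕ) : ∀ᶠ x in residual E, ∃ k ≥ N, g k x < ε := by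
    refine residual_of_dense_open ?_ (hD.mono fun x hx => ?_)
    · simp only [ofPred_exists, ofPred_and]
      exact isOpen_iUnion fun k => isOpen_const.inter (isOpen_lt (hg k) continuous_const)
    · exact (((h x hx).eventually (gt_mem_nhds hε)).and (eventually_ge_atTop N)).exists.imp
        fun k hk => ⟨hk.2, hk.1⟩
  have hm : ∀ m N : ℕ, ∀ᶠ x in residual E, ∃ k ≥ N, g k x < 1 / (m + 1) := fun m =>
    hε _ Nat.one_div_pos_of_nat
  filter_upwards [eventually_countable_forall.2 fun m => eventually_countable_forall.2 (hm m)]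
    with x hx ε hε
  obtain ⟨m, hm⟩ := exists_nat_one_div_lt hε
  exact frequently_atTop.2 fun N => (hx m N).imp fun k hk => ⟨hk.1, hk.2.trans hm⟩

end Residual

theorem Bornology.IsVonNBounded.of_image_subtype {𝕜 E : Type*} [NormedField 𝕜] [AddCommGroup E]
    [Module 𝕜 E] [TopologicalSpace E] {Z : Submodule 𝕜 E} {s : Set Z}
    (hs : IsVonNBounded 𝕜 (((↑) : Z → E) '' s)) : IsVonNBounded 𝕜 s := by
  intro V hV
  obtain ⟨W, hW, hWV⟩ := (mem_nhds_subtype _ _ _).1 hV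
  filter_upwards [hs (by simpa using hW), eventually_ne_cobounded 0] with c hc hc0 x hx
  obtain ⟨w, hw, hcw⟩ := hc (mem_image_of_mem _ hx)
  have hwZ : w ∈ Z := by simpa [← hcw, hc0] using Z.smul_mem c⁻¹ x.2
  exact ⟨⟨w, hwZ⟩, hWV hw, Subtype.ext hcw⟩

section UniformBound

variable {ι 𝕜 E F : Type*} [NontriviallyNormedField 𝕜] [AddCommGroup E] [Module 𝕜 E]
  [TopologicalSpace E] [ContinuousAdd E] [SeminormedAddCommGroup F] [NormedSpace 𝕜 F]

theorem bddAbove_norm_apply_of_forall_le_on_isOpen (S : ι → E →L[𝕜] F) {U : Set E}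
    (hU : IsOpen U) (hne : U.Nonempty) {M : ℝ} (hM : ∀ i, ∀ y ∈ U, ‖S i y‖ ≤ M) {a : ι → E}
    (ha : IsVonNBounded 𝕜 (range a)) : BddAbove (range fun i => ‖S i (a i)‖) := by
  obtain ⟨z, hz⟩ := hne
  have hW : (z + ·) ⁻¹' U ∈ 𝓝 (0 : E) :=
    (continuous_const_add z).continuousAt.preimage_mem_nhds (by simpa using hU.mem_nhds hz)
  obtain ⟨c, hc⟩ := (ha hW).exists
  refine ⟨‖c‖ * (2 * M), forall_mem_range.2 fun i => ?_⟩
  obtain ⟨w, hw, hcw⟩ := hc (mem_range_self i)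
  have hSw : ‖S i w‖ ≤ 2 * M := calc
    ‖S i w‖ = ‖S i (z + w) - S i z‖ := by simp
    _ ≤ ‖S i (z + w)‖ + ‖S i z‖ := norm_sub_le _ _
    _ ≤ 2 * M := by linarith [hM i _ hw, hM i z hz]
  calc ‖S i (a i)‖ = ‖c‖ * ‖S i w‖ := by rw [← hcw, map_smul, norm_smul]
    _ ≤ ‖c‖ * (2 * M) := by gcongr

theorem dense_setOf_exists_lt_norm_apply (S : ι → E →L[𝕜] F) {a : ι → E}
    (ha : IsVonNBounded 𝕜 (range a)) (hSa : ¬ BddAbove (range fun i => ‖S i (a i)‖)) (M : ℝ) :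
    Dense {x | ∃ i, M < ‖S i x‖} := by
  refine dense_iff_inter_open.2 fun U hU hne => by_contra fun hempty => hSa ?_
  refine bddAbove_norm_apply_of_forall_le_on_isOpen S hU hne (M := M) (fun i y hy => ?_) ha
  exact not_lt.1 fun hlt => hempty ⟨y, hy, i, hlt⟩

end UniformBound

/-- If `(T n)` satisfies the Li-Yorke Chaotic Criterion, then it admits
an irregular vector. -/
theorem exists_irregular_of_LYCC
    {X Y : Type*} [AddCommGroup X] [Module ℂ X] [MetricSpace X] [CompleteSpace X]
    [IsTopologicalAddGroup X] [ContinuousSMul ℂ X]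
    [NormedAddCommGroup Y] [NormedSpace ℂ Y]
    (T : ℕ → X →L[ℂ] Y) (h : LYCC T) :
    ∃ x : X, Irregular T x := by
  obtain ⟨X₀, nk, hnk, hX₀, a, haZ, ha, hTa⟩ := h
  let Z := (Submodule.span ℂ X₀).topologicalClosure
  have hZ : (Z : Set X) = closure (Submodule.span ℂ X₀) := Submodule.topologicalClosure_coe _
  have : CompleteSpace Z := (Submodule.isClosed_topologicalClosure _).completeSpace_coe
  let S n : Z →L[ℂ] Y := (T n).comp Z.subtypeL
  let a' n : Z := ⟨a n, by rw [← SetLike.mem_coe, hZ]; exact haZ n⟩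
  have ha' : IsVonNBounded ℂ (range a') := .of_image_subtype (by rwa [← range_comp])
  have hSa' : ¬ BddAbove (range fun n => ‖S n (a' n)‖) := fun ⟨M, hM⟩ =>
    hTa ⟨M, fun n => hM ⟨n, rfl⟩⟩
  have hunbdd := eventually_residual_not_bddAbove (f := fun n x => ‖S n x‖)
    (fun n => by fun_prop) (dense_setOf_exists_lt_norm_apply S ha' hSa')
  have hspan : Dense ((↑) ⁻¹' (Submodule.span ℂ X₀ : Set X) : Set Z) :=
    Subtype.dense_iff.2 <| hZ.trans_subset <| closure_mono fun y hy =>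
      ⟨⟨y, Submodule.le_topologicalClosure _ hy⟩, hy, rfl⟩
  have hsmall := eventually_residual_frequently_lt (g := fun k x => ‖S (nk k) x‖)
    (fun k => by fun_prop) hspan fun x hx =>
      tendsto_zero_iff_norm_tendsto_zero.1 (tendsto_zero_of_mem_span hX₀ hx)
  obtain ⟨x, hx_unbdd, hx_small⟩ := (dense_of_mem_residual (hunbdd.and hsmall)).nonempty
  exact ⟨x, liminf_ofReal_eq_zero_of_frequently_lt fun ε hε =>
      hnk.tendsto_atTop.frequently (hx_small ε hε),
    limsup_ofReal_eq_top_of_not_isBoundedUnder (mt IsBoundedUnder.bddAbove_range hx_unbdd)⟩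
end

section
/- Let X be an F-space and Y a normed space. A sequence of continuous linear operators (T_n : X → Y) is Li-Yorke chaotic if and only if it satisfies the Li-Yorke Chaotic Criterion. -/
open Filter Topology

/-! An irregular vector `x` alone witnesses LYCC (take `X₀ = {x}` and the constant sequence `x`),
and conversely every nonzero multiple of an irregular vector is irregular, so the line `ℂ ∙ x` is an
uncountable scrambled set.

The substance is that LYCC produces an irregular vector. Let `Z` be the closed span of `X₀`, a
complete metric space. The vectors `z ∈ Z` with `‖T n z‖ < ε` for arbitrarily large `n` form a
dense `Gδ`, as they include the span of `X₀`. So do those with `‖T n z‖ > M` for arbitrarily large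
`n`: otherwise the `T n` would be eventually uniformly bounded near some point of `Z`, hence, after
translating and absorbing, along the bounded sequence `(a n)`. By Baire, some `z` lies in all of
these sets, and it is irregular. -/

open Set Bornology

section ENNRealOfReal

variable {ι : Type*} {l : Filter ι}

lemma liminf_ofReal_eq_zero_iff (f : ι → ℝ) :
    liminf (fun i => ENNReal.ofReal (f i)) l = 0 ↔ ∀ ε > 0, ∃ᶠ i in l, f i < ε := by
  constructor
  · intro h ε hε
    have hlt : liminf (fun i => ENNReal.ofReal (f i)) l < ENNReal.ofReal ε := by simpa [h] using hε
    exact (frequently_lt_of_liminf_lt (by isBoundedDefault) hlt).mono fun i hi =>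
      (ENNReal.ofReal_lt_ofReal_iff hε).1 hi
  · intro h
    refine le_antisymm (ENNReal.le_of_forall_pos_le_add fun ε hε _ => ?_) bot_le
    rw [zero_add]
    refine liminf_le_of_frequently_le' ((h ε hε).mono fun i hi => ?_)
    simpa using ENNReal.ofReal_le_ofReal hi.le

lemma limsup_ofReal_eq_top_iff (f : ι → ℝ) :
    limsup (fun i => ENNReal.ofReal (f i)) l = ⊤ ↔ ∀ M, ∃ᶠ i in l, M < f i := by
  constructor
  · intro h M
    have hlt : ENNReal.ofReal M < limsup (fun i => ENNReal.ofReal (f i)) l := by simp [h]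
    exact (frequently_lt_of_lt_limsup (by isBoundedDefault) hlt).mono fun i hi =>
      (ENNReal.ofReal_lt_ofReal_iff'.1 hi).1
  · intro h
    refine ENNReal.eq_top_of_forall_nnreal_le fun r => le_limsup_of_frequently_le' ?_
    refine (h r).mono fun i hi => ?_
    simpa using ENNReal.ofReal_le_ofReal hi.le

end ENNRealOfReal

section Irregular

variable {X Y : Type*} [AddCommGroup X] [Module ℂ X] [TopologicalSpace X]
  [NormedAddCommGroup Y] [NormedSpace ℂ Y] {T : ℕ → X →L[ℂ] Y} {x : X}

lemma irregular_iff :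
    Irregular T x ↔
      (∀ ε > 0, ∃ᶠ n in atTop, ‖T n x‖ < ε) ∧ ∀ M, ∃ᶠ n in atTop, M < ‖T n x‖ := by
  rw [Irregular, liminf_ofReal_eq_zero_iff, limsup_ofReal_eq_top_iff]

lemma Irregular.ne_zero (h : Irregular T x) : x ≠ 0 := by
  rintro rfl
  simpa using ((irregular_iff.1 h).2 0).exists

lemma Irregular.smul (h : Irregular T x) {c : ℂ} (hc : c ≠ 0) : Irregular T (c • x) := by
  have hc' : 0 < ‖c‖ := norm_pos_iff.2 hc
  simp only [irregular_iff, map_smul, norm_smul] at h ⊢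
  refine ⟨fun ε hε => (h.1 (ε / ‖c‖) (div_pos hε hc')).mono fun n hn => ?_,
    fun M => (h.2 (M / ‖c‖)).mono fun n hn => ?_⟩
  · rwa [lt_div_iff₀' hc'] at hn
  · rwa [div_lt_iff₀' hc'] at hn

lemma Irregular.lycc [ContinuousSMul ℂ X] (h : Irregular T x) : LYCC T := by
  obtain ⟨hsmall, hlarge⟩ := irregular_iff.1 h
  obtain ⟨nk, hmono, hnk⟩ := extraction_forall_of_frequently fun k : ℕ =>
    hsmall (1 / (k + 1)) Nat.one_div_pos_of_nat
  refine ⟨{x}, nk, hmono, ?_, fun _ => x, fun _ => subset_closure (Submodule.subset_span rfl),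
    by simpa using isVonNBounded_singleton x, ?_⟩
  · rintro _ rfl
    exact tendsto_zero_iff_norm_tendsto_zero.2 <| squeeze_zero (fun _ => norm_nonneg _)
      (fun k => (hnk k).le) tendsto_one_div_add_atTop_nhds_zero_nat
  · rintro ⟨M, hM⟩
    obtain ⟨n, hn⟩ := (hlarge M).exists
    exact (hM n).not_gt hn

end Irregular

section

variable {𝕜 E F : Type*} [NontriviallyNormedField 𝕜] [AddCommGroup E] [Module 𝕜 E]
  [TopologicalSpace E] [NormedAddCommGroup F] [NormedSpace 𝕜 F] {T : ℕ → E →L[𝕜] F}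

lemma tendsto_apply_nhds_zero_of_mem_span {ι : Type*} {l : Filter ι} {S : ι → E →L[𝕜] F}
    {s : Set E} (hs : ∀ x ∈ s, Tendsto (fun i => S i x) l (𝓝 0)) {x : E}
    (hx : x ∈ Submodule.span 𝕜 s) : Tendsto (fun i => S i x) l (𝓝 0) := by
  induction hx using Submodule.span_induction with
  | mem x hx => exact hs x hx
  | zero => simpa using tendsto_const_nhds
  | add x y _ _ hx hy => simpa using hx.add hy
  | smul c x _ hx => simpa using hx.const_smul c

lemma isBoundedUnder_norm_apply_of_bounded_near [ContinuousAdd E] {Z : Submodule 𝕜 E} {z₀ : E}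
    (hz₀ : z₀ ∈ Z) {W : Set E} (hW : W ∈ 𝓝 z₀) {M : ℝ}
    (hbound : ∀ᶠ n in atTop, ∀ w ∈ W, w ∈ Z → ‖T n w‖ ≤ M) {a : ℕ → E} (ha : ∀ n, a n ∈ Z)
    (hbdd : IsVonNBounded 𝕜 (range a)) :
    IsBoundedUnder (· ≤ ·) atTop fun n => ‖T n (a n)‖ := by
  have hV : (z₀ + ·) ⁻¹' W ∈ 𝓝 0 := (continuous_const_add z₀).tendsto' 0 z₀ (add_zero z₀) hW
  obtain ⟨c, hac, hc⟩ := ((hbdd hV).and (eventually_ne_cobounded 0)).exists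
  refine ⟨‖c‖ * (M + M), hbound.mono fun n hn => ?_⟩
  obtain ⟨v, hv, hav⟩ := hac (mem_range_self n)
  have hvZ : v ∈ Z := by
    simpa [← hav, smul_smul, inv_mul_cancel₀ hc] using Z.smul_mem c⁻¹ (ha n)
  have hTv : ‖T n v‖ ≤ M + M := calc
    ‖T n v‖ = ‖T n (z₀ + v) - T n z₀‖ := by rw [map_add, add_sub_cancel_left]
    _ ≤ ‖T n (z₀ + v)‖ + ‖T n z₀‖ := norm_sub_le _ _
    _ ≤ M + M := add_le_add (hn _ hv (Z.add_mem hz₀ hvZ)) (hn _ (mem_of_mem_nhds hW) hz₀)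
  change ‖T n (a n)‖ ≤ _
  rw [← hav, map_smul, norm_smul]
  exact mul_le_mul_of_nonneg_left hTv (norm_nonneg c)

lemma dense_setOf_exists_lt_norm_apply_s9 [ContinuousAdd E] {Z : Submodule 𝕜 E} {a : ℕ → E}
    (ha : ∀ n, a n ∈ Z) (hbdd : IsVonNBounded 𝕜 (range a))
    (hunb : ¬ BddAbove (range fun n => ‖T n (a n)‖)) (M : ℝ) (N : ℕ) :
    Dense {z : Z | ∃ n ≥ N, M < ‖T n z‖} := by
  refine Subtype.dense_iff.2 fun z hz => mem_closure_iff_nhds.2 fun W hW => ?_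
  by_contra hempty
  refine hunb (isBoundedUnder_norm_apply_of_bounded_near (M := M) hz hW ?_ ha hbdd).bddAbove_range
  filter_upwards [eventually_ge_atTop N] with n hn w hw hwZ
  by_contra hlt
  exact hempty ⟨w, hw, ⟨w, hwZ⟩, ⟨n, hn, lt_of_not_ge hlt⟩, rfl⟩

lemma dense_setOf_exists_norm_apply_lt [ContinuousAdd E] [ContinuousConstSMul 𝕜 E] {s : Set E}
    {nk : ℕ → ℕ} (hnk : StrictMono nk) (hs : ∀ x ∈ s, Tendsto (fun k => T (nk k) x) atTop (𝓝 0))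
    {ε : ℝ} (hε : 0 < ε) (N : ℕ) :
    Dense {z : (Submodule.span 𝕜 s).topologicalClosure | ∃ n ≥ N, ‖T n z‖ < ε} := by
  refine Subtype.dense_iff.2 <| (Submodule.topologicalClosure_coe _).trans_subset <|
    closure_mono fun x hx => ⟨⟨x, Submodule.le_topologicalClosure _ hx⟩, ?_, rfl⟩
  have hsmall : ∀ᶠ k in atTop, ‖T (nk k) x‖ < ε :=
    (tendsto_zero_iff_norm_tendsto_zero.1 (tendsto_apply_nhds_zero_of_mem_span hs hx)).eventually
      (gt_mem_nhds hε)
  obtain ⟨k, hk, hkε⟩ := ((eventually_ge_atTop N).and hsmall).exists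
  exact ⟨nk k, hk.trans hnk.le_apply, hkε⟩

end

lemma eventually_residual_frequently_mem {Z α : Type*} [TopologicalSpace Z] [TopologicalSpace α]
    {g : ℕ → Z → α} (hg : ∀ n, Continuous (g n)) {U : Set α} (hU : IsOpen U)
    (hdense : ∀ N, Dense {z | ∃ n ≥ N, g n z ∈ U}) :
    ∀ᶠ z : Z in residual Z, ∃ᶠ n in atTop, g n z ∈ U := by
  simp only [frequently_atTop]
  refine eventually_countable_forall.2 fun N => residual_of_dense_open ?_ (hdense N)
  have hunion : {z | ∃ n ≥ N, g n z ∈ U} = ⋃ n ≥ N, g n ⁻¹' U := by ext; simp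
  exact hunion ▸ isOpen_biUnion fun n _ => hU.preimage (hg n)

lemma not_countable_range_smul {E : Type*} [AddCommGroup E] [Module ℂ E] {x : E} (hx : x ≠ 0) :
    ¬ (range fun c : ℂ => c • x).Countable := fun h =>
  not_countable_complex <| by simpa using h.preimage (smul_left_injective ℂ hx)

section Criterion

variable {X Y : Type*} [AddCommGroup X] [Module ℂ X] [MetricSpace X] [CompleteSpace X]
  [ContinuousAdd X] [ContinuousConstSMul ℂ X] [NormedAddCommGroup Y] [NormedSpace ℂ Y]
  {T : ℕ → X →L[ℂ] Y}

theorem LYCC.exists_irregular (h : LYCC T) : ∃ x, Irregular T x := by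
  obtain ⟨X₀, nk, hnk, h0, a, ha, hbdd, hunb⟩ := h
  set Z := (Submodule.span ℂ X₀).topologicalClosure
  have : CompleteSpace Z := (Submodule.isClosed_topologicalClosure _).completeSpace_coe
  have hcont : ∀ n, Continuous fun z : Z => ‖T n z‖ := fun n => by fun_prop
  have hZa : ∀ n, a n ∈ Z := fun n => by
    rw [← SetLike.mem_coe, Submodule.topologicalClosure_coe]; exact ha n
  have hunb' : ¬ BddAbove (range fun n => ‖T n (a n)‖) := by
    rintro ⟨M, hM⟩; exact hunb ⟨M, fun n => hM (mem_range_self n)⟩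
  have hsmall (m : ℕ) : ∀ᶠ z : Z in residual Z, ∃ᶠ n in atTop, ‖T n z‖ ∈ Iio (1 / (m + 1) : ℝ) :=
    eventually_residual_frequently_mem hcont isOpen_Iio
      (dense_setOf_exists_norm_apply_lt hnk h0 Nat.one_div_pos_of_nat)
  have hlarge (m : ℕ) : ∀ᶠ z : Z in residual Z, ∃ᶠ n in atTop, ‖T n z‖ ∈ Ioi (m : ℝ) :=
    eventually_residual_frequently_mem hcont isOpen_Ioi
      (dense_setOf_exists_lt_norm_apply_s9 hZa hbdd hunb' m)
  obtain ⟨z, hz⟩ := (dense_of_mem_residual ((eventually_countable_forall.2 hsmall).and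
    (eventually_countable_forall.2 hlarge))).nonempty
  refine ⟨z, irregular_iff.2 ⟨fun ε hε => ?_, fun M => ?_⟩⟩
  · obtain ⟨m, hm⟩ := exists_nat_one_div_lt hε
    exact (hz.1 m).mono fun n hn => hn.trans hm
  · obtain ⟨m, hm⟩ := exists_nat_ge M
    exact (hz.2 m).mono fun n hn => hm.trans_lt hn

end Criterion

/-- `(T n)` is Li-Yorke chaotic (there is an uncountable set Γ such that
p - q is irregular for all distinct p, q ∈ Γ) if and only if it satisfies the
Li-Yorke Chaotic Criterion. -/
theorem liYorkeChaotic_iff_LYCC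
    {X Y : Type*} [AddCommGroup X] [Module ℂ X] [MetricSpace X] [CompleteSpace X]
    [IsTopologicalAddGroup X] [ContinuousSMul ℂ X]
    [NormedAddCommGroup Y] [NormedSpace ℂ Y]
    (T : ℕ → X →L[ℂ] Y) :
    (∃ Γ : Set X, ¬ Γ.Countable ∧ ∀ p ∈ Γ, ∀ q ∈ Γ, p ≠ q → Irregular T (p - q)) ↔
      LYCC T := by
  constructor
  · rintro ⟨Γ, hΓ, hirr⟩
    obtain ⟨p, hp, q, hq, hpq⟩ : Γ.Nontrivial :=
      not_subsingleton_iff.1 (mt Subsingleton.countable hΓ)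
    exact (hirr p hp q hq hpq).lycc
  · intro h
    obtain ⟨x, hx⟩ := h.exists_irregular
    refine ⟨range fun c : ℂ => c • x, not_countable_range_smul hx.ne_zero, ?_⟩
    rintro _ ⟨c, rfl⟩ _ ⟨d, rfl⟩ hcd
    rw [← sub_smul]
    exact hx.smul (sub_ne_zero.2 fun h => hcd (h ▸ rfl))
end

section
/- Let X be an infinite-dimensional separable Banach space and let T be an Augé-Tapia operator of type N: there is a finite-dimensional subspace V with a continuous projection P : X → V and a set F ⊂ V with F ≠ V such that Rec(T) = P⁻¹(F). Then Rec(T) is not dense-lineable: there is no dense linear subspace E of X with E ⊆ Rec(T). -/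
open Filter Topology

/-- The set of recurrent vectors of an operator `T`: those `x` for which there is a
strictly increasing sequence `(ω n)` with `T ^ (ω n) x → x`. -/
def RecSet {X : Type*} [NormedAddCommGroup X] [NormedSpace ℂ X]
    (T : X →L[ℂ] X) : Set X :=
  {x : X | ∃ ω : ℕ → ℕ, StrictMono ω ∧
    Filter.Tendsto (fun n => (T ^ ω n) x) Filter.atTop (nhds x)}

/-- Let `X` be an infinite-dimensional separable Banach space and `T` an
Augé-Tapia operator of type `N`: there are a finite-dimensional subspace `V`, a
continuous projection `P` of `X` onto `V`, and a set `F ⊆ V` with `F ≠ V`, such that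
`Rec(T) = P⁻¹(F)`. Then `Rec(T)` is not dense-lineable: no dense linear subspace of
`X` is contained in `Rec(T)`. -/
theorem rec_not_dense_lineable
    {X : Type*} [NormedAddCommGroup X] [NormedSpace ℂ X] [CompleteSpace X]
    [TopologicalSpace.SeparableSpace X]
    (hinf : ¬ FiniteDimensional ℂ X)
    (T : X →L[ℂ] X)
    (V : Submodule ℂ X) (hVfin : FiniteDimensional ℂ V)
    (P : X →L[ℂ] X) (hPV : ∀ x : X, P x ∈ V) (hPid : ∀ v ∈ V, P v = v)
    (F : Set X) (hFV : F ⊆ (V : Set X)) (hFne : F ≠ (V : Set X))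
    (hRec : RecSet T = P ⁻¹' F) :
    ¬ ∃ E : Submodule ℂ X, Dense (E : Set X) ∧ (E : Set X) ⊆ RecSet T := by
  rintro ⟨E, hE, hEsub⟩
  -- P(E) is a submodule contained in V
  set W : Submodule ℂ X := E.map P.toLinearMap with hW
  have hWV : W ≤ V := by
    rintro _ ⟨x, -, rfl⟩; exact hPV x
  haveI : FiniteDimensional ℂ W := Submodule.finiteDimensional_of_le hWV
  have hWclosed : IsClosed (W : Set X) := Submodule.closed_of_finiteDimensional W
  -- V ⊆ closure W
  have hVsub : (V : Set X) ⊆ closure (W : Set X) := by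
    intro v hv
    have h1 : P '' closure (E : Set X) ⊆ closure (P '' (E : Set X)) :=
      image_closure_subset_closure_image P.continuous
    have h2 : closure (E : Set X) = Set.univ := hE.closure_eq
    have : v ∈ P '' closure (E : Set X) := by
      rw [h2]; exact ⟨v, trivial, hPid v hv⟩
    exact h1 this
  have hVW : (V : Set X) ⊆ (W : Set X) := fun v hv =>
    hWclosed.closure_eq ▸ hVsub hv
  -- W ⊆ F
  have hWF : (W : Set X) ⊆ F := by
    rintro _ ⟨x, hx, rfl⟩
    have := hEsub hx
    rw [hRec] at this
    exact this
  exact hFne (Set.Subset.antisymm hFV (fun v hv => hWF (hVW hv)))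
end
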